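/- arXiv:1710.01181 — 2 statements merged into one kernel-verified Lean document; each statement's English description precedes it below -/
import Mathlib

section
/- For every a with 0 < a < √2, setting ω0 = √(2 − a²) and τ0 = (1/ω0) arcsin(a ω0) if 1 < a < √2, τ0 = (1/ω0)(π − arcsin(a ω0)) if 0 < a ≤ 1, the complex number λ = i ω0 is a root of the characteristic equation λ² − aλ + 1 − e^{−τ0 λ} = 0; equivalently, cos(τ0 ω0) = a² − 1 and sin(τ0 ω0) = a ω0. (In particular a ω0 = a√(2−a²) ∈ (0,1], so arcsin(a ω0) is defined.) -/
open Real Complex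

/-- `ω0(a) = √(2 - a²)`. -/
noncomputable def omega0 (a : ℝ) : ℝ := Real.sqrt (2 - a ^ 2)

/-- The critical delay `τ0(a)`: `(1/ω0) arcsin(a ω0)` for `1 < a < √2`,
and `(1/ω0)(π - arcsin(a ω0))` for `0 < a ≤ 1`. -/
noncomputable def tau0 (a : ℝ) : ℝ :=
  if 1 < a then Real.arcsin (a * omega0 a) / omega0 a
  else (Real.pi - Real.arcsin (a * omega0 a)) / omega0 a

/-- for `0 < a < √2`, `λ = i ω0` is a root of the characteristic equation
`λ² − aλ + 1 − e^{−τ0 λ} = 0`; equivalently `cos(τ0 ω0) = a² − 1` and `sin(τ0 ω0) = a ω0`;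
in particular `a ω0 ∈ (0,1]` so that `arcsin(a ω0)` is meaningful. -/
theorem characteristic_root_at_i_omega0 (a : ℝ) (ha0 : 0 < a) (ha2 : a < Real.sqrt 2) :
    (0 < a * omega0 a ∧ a * omega0 a ≤ 1) ∧
    ((Complex.I * (omega0 a : ℂ)) ^ 2 - (a : ℂ) * (Complex.I * (omega0 a : ℂ)) + 1 -
        Complex.exp (-(tau0 a : ℂ) * (Complex.I * (omega0 a : ℂ))) = 0) ∧
    Real.cos (tau0 a * omega0 a) = a ^ 2 - 1 ∧
    Real.sin (tau0 a * omega0 a) = a * omega0 a := by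
  set ω := omega0 a with hωdef
  have ha2' : a ^ 2 < 2 := by
    have := Real.sq_sqrt (by norm_num : (2:ℝ) ≥ 0)
    nlinarith [Real.sqrt_nonneg 2, sq_nonneg (a - Real.sqrt 2)]
  have hω2 : ω ^ 2 = 2 - a ^ 2 := Real.sq_sqrt (by linarith)
  have hωpos : 0 < ω := Real.sqrt_pos.mpr (by linarith)
  have hpos : 0 < a * ω := mul_pos ha0 hωpos
  have hsq : (a * ω) ^ 2 = 1 - (a ^ 2 - 1) ^ 2 := by
    have : (a * ω) ^ 2 = a ^ 2 * ω ^ 2 := by ring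
    rw [this, hω2]; ring
  have hle : a * ω ≤ 1 := by nlinarith [sq_nonneg (a ^ 2 - 1)]
  have hmem1 : -1 ≤ a * ω := by linarith
  have hsin_arcsin : Real.sin (Real.arcsin (a * ω)) = a * ω :=
    Real.sin_arcsin hmem1 hle
  have hcos_arcsin : Real.cos (Real.arcsin (a * ω)) = |a ^ 2 - 1| := by
    rw [Real.cos_arcsin]
    rw [show 1 - (a * ω) ^ 2 = (a ^ 2 - 1) ^ 2 by nlinarith]
    exact Real.sqrt_sq_eq_abs _
  have hωne : ω ≠ 0 := ne_of_gt hωpos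
  have hcos : Real.cos (tau0 a * ω) = a ^ 2 - 1 := by
    by_cases h1 : 1 < a
    · have : tau0 a * ω = Real.arcsin (a * ω) := by
        rw [tau0, if_pos h1, ← hωdef]; field_simp
      rw [this, hcos_arcsin, abs_of_pos (by nlinarith)]
    · have : tau0 a * ω = Real.pi - Real.arcsin (a * ω) := by
        rw [tau0, if_neg h1, ← hωdef]; field_simp
      rw [this, Real.cos_pi_sub, hcos_arcsin]
      have h1' : a ≤ 1 := le_of_not_gt h1
      rw [abs_of_nonpos (by nlinarith)]; ring
  have hsin : Real.sin (tau0 a * ω) = a * ω := by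
    by_cases h1 : 1 < a
    · have : tau0 a * ω = Real.arcsin (a * ω) := by
        rw [tau0, if_pos h1, ← hωdef]; field_simp
      rw [this, hsin_arcsin]
    · have : tau0 a * ω = Real.pi - Real.arcsin (a * ω) := by
        rw [tau0, if_neg h1, ← hωdef]; field_simp
      rw [this, Real.sin_pi_sub, hsin_arcsin]
  refine ⟨⟨hpos, hle⟩, ?_, hcos, hsin⟩
  have key : Complex.exp (-(tau0 a : ℂ) * (Complex.I * (ω : ℂ))) =
      ((a ^ 2 - 1 : ℝ) : ℂ) - ((a * ω : ℝ) : ℂ) * Complex.I := by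
    rw [show -(tau0 a : ℂ) * (Complex.I * (ω : ℂ)) = ((-(tau0 a * ω) : ℝ) : ℂ) * Complex.I by
      push_cast; ring]
    rw [Complex.exp_mul_I, ← Complex.ofReal_cos, ← Complex.ofReal_sin,
      Real.cos_neg, Real.sin_neg, hcos, hsin]
    push_cast; ring
  rw [key]
  have hω2c : (ω : ℂ) ^ 2 = 2 - (a : ℂ) ^ 2 := by exact_mod_cast hω2
  push_cast
  linear_combination (ω : ℂ) ^ 2 * Complex.I_sq - hω2c
end

section
/- For every a with 0 < a < √2 such that a ≠ τ0(a) and b2² + b3² ≠ 0, the explicit functions z1, z2, z3 : [−1,0] → ℝ² and ψ1, ψ2, ψ3 : [0,1] → ℝ^{2*} defined in the context satisfy the duality relations ⟨ψ_i, z_j⟩ = δ_{ij} for 1 ≤ i,j ≤ 3, where ⟨ψ, z⟩ = ψ(0) z(0) + ∫₀¹ ψ(s) B z(s−1) ds with B the 2×2 matrix with entries B₁₁ = B₁₂ = B₂₂ = 0 and B₂₁ = τ0. -/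
/-!
Put `c = τ0 ω0`; then `sin c = a ω0` and `cos c = a² - 1`. The second component of every `ψᵢ`
and the first component of every `zⱼ` are combinations of `1`, `sin (c ·)`, `cos (c ·)`, and the
shift `θ ↦ θ - 1` rotates the coefficients of such a combination by the angle `c`. Hence every
`⟨ψᵢ, zⱼ⟩` is given by the Gram form of `1, sin (c ·), cos (c ·)` on `[0, 1]`, and after clearing
denominators each duality relation becomes a polynomial identity in `a, τ0, ω0` modulo
`ω0² = 2 - a²`.
-/

open Real

/-- `b2 = (1/2)(a − τ0 cos(τ0 ω0))`. -/
noncomputable def bb2 (a : ℝ) : ℝ := (1 / 2) * (a - tau0 a * Real.cos (tau0 a * omega0 a))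

/-- `b3 = −ω0 + (τ0/2) sin(τ0 ω0)`. -/
noncomputable def bb3 (a : ℝ) : ℝ := -omega0 a + (tau0 a / 2) * Real.sin (tau0 a * omega0 a)

/-- The column basis functions `z1, z2, z3 : [−1,0] → ℝ²`. -/
noncomputable def zfun (a : ℝ) : Fin 3 → ℝ → ℝ × ℝ
  | 0 => fun _ => (1, 0)
  | 1 => fun θ => (Real.sin (tau0 a * omega0 a * θ), omega0 a * Real.cos (tau0 a * omega0 a * θ))
  | 2 => fun θ => (Real.cos (tau0 a * omega0 a * θ), -omega0 a * Real.sin (tau0 a * omega0 a * θ))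

/-- The row basis functions `ψ1, ψ2, ψ3 : [0,1] → ℝ^{2*}` (a row vector is recorded
as a pair of real components). -/
noncomputable def psifun (a : ℝ) : Fin 3 → ℝ → ℝ × ℝ
  | 0 => fun _ => (a / (a - tau0 a), -(1 / (a - tau0 a)))
  | 1 => fun s =>
      (1 / (2 * (bb2 a ^ 2 + bb3 a ^ 2)) *
        (omega0 a * (tau0 a - a) * Real.cos (tau0 a * omega0 a * s) +
          (4 - a ^ 2 - a * tau0 a) * Real.sin (tau0 a * omega0 a * s)),
       1 / (2 * (bb2 a ^ 2 + bb3 a ^ 2)) *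
        (-(2 * bb2 a) * Real.sin (tau0 a * omega0 a * s) -
          2 * bb3 a * Real.cos (tau0 a * omega0 a * s)))
  | 2 => fun s =>
      (1 / (2 * (bb2 a ^ 2 + bb3 a ^ 2)) *
        ((4 - a ^ 2 - a * tau0 a) * Real.cos (tau0 a * omega0 a * s) -
          omega0 a * (tau0 a - a) * Real.sin (tau0 a * omega0 a * s)),
       1 / (2 * (bb2 a ^ 2 + bb3 a ^ 2)) *
        (2 * bb3 a * Real.sin (tau0 a * omega0 a * s) -
          2 * bb2 a * Real.cos (tau0 a * omega0 a * s)))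

/-- The bilinear form `⟨ψ, z⟩ = ψ(0) z(0) + ∫₀¹ ψ(s) B z(s−1) ds`, where
`B` is the 2×2 matrix with `B₂₁ = τ0` and all other entries `0`; hence
`ψ(s) B z(s−1) = ψ₂(s) · τ0 · z₁(s−1)`. -/
noncomputable def pairing (a : ℝ) (ψ z : ℝ → ℝ × ℝ) : ℝ :=
  (ψ 0).1 * (z 0).1 + (ψ 0).2 * (z 0).2 +
    ∫ s in (0 : ℝ)..1, (ψ s).2 * (tau0 a * (z (s - 1)).1)

noncomputable def sinCosGram (c p q r u v w : ℝ) : ℝ :=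
  p * u + (p * v + q * u) * (1 - cos c) / c + (p * w + r * u) * sin c / c
    + q * v * (1 / 2 - sin c * cos c / (2 * c)) + r * w * (1 / 2 + sin c * cos c / (2 * c))
    + (q * w + r * v) * sin c ^ 2 / (2 * c)

theorem integral_sinCos_mul_sinCos {c : ℝ} (hc : c ≠ 0) (p q r u v w : ℝ) :
    ∫ s in (0 : ℝ)..1,
        (p + q * sin (c * s) + r * cos (c * s)) * (u + v * sin (c * s) + w * cos (c * s))
      = sinCosGram c p q r u v w := by
  have hsin (s : ℝ) : HasDerivAt (fun s => sin (c * s)) (cos (c * s) * c) s := by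
    simpa using ((hasDerivAt_id s).const_mul c).sin
  have hcos (s : ℝ) : HasDerivAt (fun s => cos (c * s)) (-sin (c * s) * c) s := by
    simpa using ((hasDerivAt_id s).const_mul c).cos
  have hF (s : ℝ) : HasDerivAt (fun s => p * u * s - (p * v + q * u) * cos (c * s) / c
        + (p * w + r * u) * sin (c * s) / c + q * v * (s / 2 - sin (c * s) * cos (c * s) / (2 * c))
        + r * w * (s / 2 + sin (c * s) * cos (c * s) / (2 * c))
        + (q * w + r * v) * sin (c * s) ^ 2 / (2 * c))
      ((p + q * sin (c * s) + r * cos (c * s)) * (u + v * sin (c * s) + w * cos (c * s))) s := by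
    have hsc := (hsin s).mul (hcos s)
    refine (((((((hasDerivAt_id s).const_mul (p * u)).sub
      (((hcos s).const_mul (p * v + q * u)).div_const c)).add
      (((hsin s).const_mul (p * w + r * u)).div_const c)).add
      ((((hasDerivAt_id s).div_const 2).sub (hsc.div_const (2 * c))).const_mul (q * v))).add
      ((((hasDerivAt_id s).div_const 2).add (hsc.div_const (2 * c))).const_mul (r * w))).add
      ((((hsin s).pow 2).const_mul (q * w + r * v)).div_const (2 * c))).congr_deriv ?_
    field_simp
    linear_combination -(q * v + r * w) * sin_sq_add_cos_sq (c * s)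
  rw [intervalIntegral.integral_eq_sub_of_hasDerivAt (fun s _ => hF s)
    (by apply Continuous.intervalIntegrable; fun_prop)]
  simp only [sinCosGram, mul_zero, mul_one, sin_zero, cos_zero]
  field_simp
  ring

theorem sinCos_comb_sub_one (c u v w θ : ℝ) :
    u + v * sin (c * (θ - 1)) + w * cos (c * (θ - 1))
      = u + (v * cos c + w * sin c) * sin (c * θ) + (w * cos c - v * sin c) * cos (c * θ) := by
  rw [mul_sub, mul_one, sin_sub, cos_sub]
  ring

theorem pairing_eq_sinCosGram {a c : ℝ} (hc : c ≠ 0) {ψ z : ℝ → ℝ × ℝ} {p q r u v w : ℝ}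
    (hψ : ∀ s, (ψ s).2 = p + q * sin (c * s) + r * cos (c * s))
    (hz : ∀ θ, (z θ).1 = u + v * sin (c * θ) + w * cos (c * θ)) :
    pairing a ψ z = (ψ 0).1 * (z 0).1 + (ψ 0).2 * (z 0).2
      + tau0 a * sinCosGram c p q r u (v * cos c + w * sin c) (w * cos c - v * sin c) := by
  simp only [pairing, hψ, hz, sinCos_comb_sub_one, ← integral_sinCos_mul_sinCos hc,
    ← intervalIntegral.integral_const_mul]
  congr 1
  refine intervalIntegral.integral_congr fun s _ => ?_
  ring

theorem omega0_sq {a : ℝ} (ha : a ^ 2 ≤ 2) : omega0 a ^ 2 = 2 - a ^ 2 :=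
  sq_sqrt (by linarith)

theorem omega0_pos {a : ℝ} (ha : a ^ 2 < 2) : 0 < omega0 a :=
  sqrt_pos.2 (by linarith)

theorem abs_mul_omega0_le_one {a : ℝ} (ha : a ^ 2 ≤ 2) : |a * omega0 a| ≤ 1 := by
  rw [← sq_le_one_iff_abs_le_one, mul_pow, omega0_sq ha]
  nlinarith [sq_nonneg (a ^ 2 - 1)]

theorem tau0_mul_omega0 {a : ℝ} (ha : a ^ 2 < 2) : tau0 a * omega0 a =
    if 1 < a then arcsin (a * omega0 a) else π - arcsin (a * omega0 a) := by
  rw [tau0]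
  split_ifs <;> exact div_mul_cancel₀ _ (omega0_pos ha).ne'

theorem sin_tau0_mul_omega0 {a : ℝ} (ha : a ^ 2 < 2) :
    sin (tau0 a * omega0 a) = a * omega0 a := by
  obtain ⟨h₁, h₂⟩ := abs_le.1 (abs_mul_omega0_le_one ha.le)
  rw [tau0_mul_omega0 ha]
  split_ifs
  · exact sin_arcsin h₁ h₂
  · rw [sin_pi_sub, sin_arcsin h₁ h₂]

theorem cos_tau0_mul_omega0 {a : ℝ} (ha₀ : 0 ≤ a) (ha : a ^ 2 < 2) :
    cos (tau0 a * omega0 a) = a ^ 2 - 1 := by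
  have h : 1 - (a * omega0 a) ^ 2 = (a ^ 2 - 1) ^ 2 := by
    rw [mul_pow, omega0_sq ha.le]; ring
  rw [tau0_mul_omega0 ha]
  split_ifs with h₁
  · rw [cos_arcsin, h, sqrt_sq (by nlinarith)]
  · rw [cos_pi_sub, cos_arcsin, h, sqrt_sq_eq_abs, abs_of_nonpos (by nlinarith)]
    ring

theorem tau0_mul_omega0_pos {a : ℝ} (ha₀ : 0 < a) (ha : a ^ 2 < 2) : 0 < tau0 a * omega0 a := by
  rw [tau0_mul_omega0 ha]
  split_ifs
  · exact arcsin_pos.2 (mul_pos ha₀ (omega0_pos ha))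
  · linarith [arcsin_le_pi_div_two (a * omega0 a), pi_pos]

theorem bb2_eq {a : ℝ} (ha₀ : 0 ≤ a) (ha : a ^ 2 < 2) :
    bb2 a = (a - tau0 a * (a ^ 2 - 1)) / 2 := by
  rw [bb2, cos_tau0_mul_omega0 ha₀ ha]; ring

theorem bb3_eq {a : ℝ} (ha : a ^ 2 < 2) : bb3 a = (a * tau0 a - 2) * omega0 a / 2 := by
  rw [bb3, sin_tau0_mul_omega0 ha]; ring

theorem zfun_fst (a : ℝ) (j : Fin 3) (θ : ℝ) :
    (zfun a j θ).1 = ![1, 0, 0] j + ![0, 1, 0] j * sin (tau0 a * omega0 a * θ)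
      + ![0, 0, 1] j * cos (tau0 a * omega0 a * θ) := by
  fin_cases j <;> simp [zfun]

theorem psifun_snd (a : ℝ) (i : Fin 3) (s : ℝ) :
    (psifun a i s).2 = ![-(1 / (a - tau0 a)), 0, 0] i
      + ![0, -bb2 a / (bb2 a ^ 2 + bb3 a ^ 2), bb3 a / (bb2 a ^ 2 + bb3 a ^ 2)] i
        * sin (tau0 a * omega0 a * s)
      + ![0, -bb3 a / (bb2 a ^ 2 + bb3 a ^ 2), -bb2 a / (bb2 a ^ 2 + bb3 a ^ 2)] i
        * cos (tau0 a * omega0 a * s) := by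
  fin_cases i <;> simp only [psifun, one_div, mul_inv, Fin.zero_eta, Fin.mk_one, Fin.reduceFinMk,
    Matrix.cons_val] <;> ring

/-- the explicit bases `(ψ1, ψ2, ψ3)` and `(z1, z2, z3)` are dual:
`⟨ψᵢ, zⱼ⟩ = δᵢⱼ`. -/
theorem duality_relations (a : ℝ) (ha0 : 0 < a) (ha2 : a < Real.sqrt 2)
    (hne : a ≠ tau0 a) (hb : bb2 a ^ 2 + bb3 a ^ 2 ≠ 0) :
    ∀ i j : Fin 3, pairing a (psifun a i) (zfun a j) = if i = j then 1 else 0 := by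
  have ha : a ^ 2 < 2 := (lt_sqrt ha0.le).1 ha2
  have hc := (tau0_mul_omega0_pos ha0 ha).ne'
  have hω := (omega0_pos ha).ne'
  have hτ := left_ne_zero_of_mul hc
  have hat : a - tau0 a ≠ 0 := sub_ne_zero.2 hne
  have hN : (a - tau0 a * (a ^ 2 - 1)) ^ 2 + (a * tau0 a - 2) ^ 2 * omega0 a ^ 2 ≠ 0 := by
    contrapose! hb
    rw [bb2_eq ha0.le ha, bb3_eq ha]
    linear_combination hb / 4
  have hw := omega0_sq ha.le
  intro i j
  rw [pairing_eq_sinCosGram hc (psifun_snd a i) (zfun_fst a j)]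
  fin_cases i <;> fin_cases j <;>
    simp only [psifun, zfun, sinCosGram, sin_tau0_mul_omega0 ha, cos_tau0_mul_omega0 ha0.le ha,
      bb2_eq ha0.le ha, bb3_eq ha, Fin.zero_eta, Fin.mk_one, Fin.reduceFinMk, Matrix.cons_val,
      sin_zero, cos_zero, mul_zero, Fin.reduceEq, ↓reduceIte] <;>
    -- each entry is now a polynomial identity in `a`, `τ0`, `ω0` modulo `ω0² = 2 - a²`
    field_simp <;> clear * - hw <;> grind
end
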